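/- Let φ be an even integrable weight function on ℝ. For real numbers e_1,...,e_n and a_1,...,a_n, the statistic ∫_ℝ |n^{-1/2} Σ_j a_j exp(i t e_j)|² φ(t) dt built from the complex exponential equals the statistic ∫_ℝ |n^{-1/2} Σ_j a_j (cos(t e_j) + sin(t e_j))|² φ(t) dt built from the real transformation cos + sin. -/

import Mathlib

/-!
Write `F t = n^{-1/2} ∑ⱼ aⱼ exp(i t eⱼ)`. Then `|F|² = (Re F)² + (Im F)²`, while the real
statistic integrates `(Re F + Im F)² = |F|² + 2 Re F Im F`. Since the `aⱼ, eⱼ` are real,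
`F (-t) = conj (F t)`, so the cross term `Re F Im F` is odd and integrates to zero against the
even weight `φ`.
-/

open MeasureTheory Real ComplexConjugate

section NegInvariant

variable {G E : Type*} [MeasurableSpace G] [AddGroup G] [MeasurableNeg G]
  [NormedAddCommGroup E] [NormedSpace ℝ E] {μ : Measure G} [μ.IsNegInvariant]

theorem integral_eq_zero_of_odd {f : G → E} (hf : ∀ x, f (-x) = -f x) :
    ∫ x, f x ∂μ = 0 := by
  have h : ∫ x, f x ∂μ = -∫ x, f x ∂μ := by
    conv_lhs => rw [← integral_neg_eq_self f μ]
    simp only [hf, integral_neg]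
  rw [eq_neg_iff_add_eq_zero, ← two_smul ℝ] at h
  exact (smul_eq_zero.mp h).resolve_left two_ne_zero

theorem integral_re_add_im_sq_mul_eq_integral_norm_sq_mul {F : G → ℂ} {φ : G → ℝ} {C : ℝ}
    (hF : AEStronglyMeasurable F μ) (hF_bdd : ∀ x, ‖F x‖ ≤ C)
    (hF_neg : ∀ x, F (-x) = conj (F x)) (hφ : Integrable φ μ) (hφ_even : ∀ x, φ (-x) = φ x) :
    ∫ x, ((F x).re + (F x).im) ^ 2 * φ x ∂μ = ∫ x, ‖F x‖ ^ 2 * φ x ∂μ := by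
  have hbdd : ∀ x, ‖F x‖ ^ 2 ≤ C ^ 2 := fun x => pow_le_pow_left₀ (norm_nonneg _) (hF_bdd x) 2
  have h_norm : Integrable (fun x => ‖F x‖ ^ 2 * φ x) μ :=
    hφ.bdd_mul (c := C ^ 2) (hF.norm.pow 2) (.of_forall fun x => by simpa using hbdd x)
  have h_cross : Integrable (fun x => 2 * (F x).re * (F x).im * φ x) μ := by
    refine hφ.bdd_mul (c := C ^ 2) ?_ (.of_forall fun x => ?_)
    · exact ((Complex.continuous_re.comp_aestronglyMeasurable hF).const_mul 2).mul
        (Complex.continuous_im.comp_aestronglyMeasurable hF)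
    · have := hbdd x
      rw [Complex.sq_norm, Complex.normSq_apply] at this
      rw [Real.norm_eq_abs, abs_le]
      constructor <;> nlinarith [sq_nonneg ((F x).re + (F x).im), sq_nonneg ((F x).re - (F x).im)]
  have h_odd : ∫ x, 2 * (F x).re * (F x).im * φ x ∂μ = 0 :=
    integral_eq_zero_of_odd fun x => by
      simp only [hF_neg, hφ_even, Complex.conj_re, Complex.conj_im]
      ring
  calc ∫ x, ((F x).re + (F x).im) ^ 2 * φ x ∂μ
      = ∫ x, (‖F x‖ ^ 2 * φ x + 2 * (F x).re * (F x).im * φ x) ∂μ := by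
        congr 1; ext x; rw [Complex.sq_norm, Complex.normSq_apply]; ring
    _ = ∫ x, ‖F x‖ ^ 2 * φ x ∂μ := by rw [integral_add h_norm h_cross, h_odd, add_zero]

end NegInvariant

theorem stmt_2_general (n : ℕ) (e a : Fin n → ℝ) (φ : ℝ → ℝ)
    (heven : ∀ t, φ (-t) = φ t)
    (hint : Integrable φ) :
    ∫ t : ℝ, (‖((Real.sqrt n : ℝ) : ℂ)⁻¹ *
        ∑ j, (a j : ℂ) * Complex.exp (Complex.I * (t : ℂ) * (e j : ℂ))‖)^2 * φ t
      = ∫ t : ℝ, ((Real.sqrt n)⁻¹ *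
          ∑ j, a j * (Real.cos (t * e j) + Real.sin (t * e j)))^2 * φ t := by
  set F : ℝ → ℂ := fun t => ((Real.sqrt n : ℝ) : ℂ)⁻¹ *
    ∑ j, (a j : ℂ) * Complex.exp (Complex.I * (t : ℂ) * (e j : ℂ))
  have h_exp : ∀ (t : ℝ) j, Complex.exp (Complex.I * (t : ℂ) * (e j : ℂ))
      = Complex.exp (((t * e j : ℝ) : ℂ) * Complex.I) := fun t j => by push_cast; ring_nf
  have h_bdd : ∀ t, ‖F t‖ ≤ (Real.sqrt n)⁻¹ * ∑ j, |a j| := fun t => by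
    simp only [F, h_exp, norm_mul, norm_inv, Complex.norm_real, Real.norm_eq_abs,
      abs_of_nonneg (Real.sqrt_nonneg _)]
    gcongr
    refine (norm_sum_le _ _).trans_eq (Finset.sum_congr rfl fun j _ => ?_)
    rw [norm_mul, Complex.norm_exp_ofReal_mul_I, Complex.norm_real, Real.norm_eq_abs, mul_one]
  have h_neg : ∀ t, F (-t) = conj (F t) := fun t => by
    simp only [F, map_mul, map_inv₀, map_sum, Complex.conj_ofReal, ← Complex.exp_conj,
      Complex.conj_I]
    push_cast
    ring_nf
  have h_re_add_im : ∀ t, (F t).re + (F t).im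
      = (Real.sqrt n)⁻¹ * ∑ j, a j * (Real.cos (t * e j) + Real.sin (t * e j)) := fun t => by
    simp only [F, h_exp, ← Complex.ofReal_inv, Complex.re_ofReal_mul, Complex.im_ofReal_mul,
      Complex.re_sum, Complex.im_sum, Complex.exp_ofReal_mul_I_re, Complex.exp_ofReal_mul_I_im]
    simp only [mul_add, Finset.sum_add_distrib]
  simp_rw [← h_re_add_im]
  exact (integral_re_add_im_sq_mul_eq_integral_norm_sq_mul (by fun_prop) h_bdd h_neg hint heven).symm

theorem stmt_2 (n : ℕ) (hn : 0 < n) (e a : Fin n → ℝ) (φ : ℝ → ℝ)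
    (hmeas : Measurable φ) (hpos : ∀ t, 0 ≤ φ t) (heven : ∀ t, φ (-t) = φ t)
    (hint : Integrable φ) :
    ∫ t : ℝ, (‖((Real.sqrt n : ℝ) : ℂ)⁻¹ *
        ∑ j, (a j : ℂ) * Complex.exp (Complex.I * (t : ℂ) * (e j : ℂ))‖)^2 * φ t
      = ∫ t : ℝ, ((Real.sqrt n)⁻¹ *
          ∑ j, a j * (Real.cos (t * e j) + Real.sin (t * e j)))^2 * φ t :=
  stmt_2_general n e a φ heven hint
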